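/- Let p : ℝ → ℝ be a measurable probability density (p ≥ 0, ∫_ℝ p = 1) with p > 0 Lebesgue-almost everywhere and p continuous at Lebesgue-almost every point, and let q : ℝ → ℝ be measurable, continuous at Lebesgue-almost every point, with finite Fisher-type integral ∫_ℝ q(x)²/p(x) dx < ∞. For c ∈ (0,1) and α > 0 define the Fisher information of the asymmetric staircase mechanism I(c, α) := ∫_ℝ [ (e^α − 1)² (∫_{{x : g_c(x₀) ≤ x ≤ d_c(x₀)}} q(x) dx)² / (1 + (e^α − 1) ∫_{{x : g_c(x₀) ≤ x ≤ d_c(x₀)}} p(x) dx) ] · (ν(x₀)/(1 + c(e^α − 1))) dx₀. Then for all sequences (c_n) in (0, 1/2) with c_n → 0 and (α_n) of positive reals with c_n·e^{α_n} → ∞, one has I(c_n, α_n) → ∫_ℝ q(x)²/p(x) dx; that is, the asymmetric mechanism recovers the full non-private Fisher information in the limit. -/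

import Mathlib

open MeasureTheory

/-- The generalized inverse `g⁻¹(x) = sup {y ∈ ℝ : g(y) ≤ x}` in the extended reals
(`sup ∅ = ⊥ = -∞`). -/
noncomputable def ginv (g : ℝ → EReal) (x : ℝ) : EReal :=
  sSup (Real.toEReal '' {y : ℝ | g y ≤ (x : EReal)})

/-- The generalized inverse `d⁻¹(x) = inf {y ∈ ℝ : d(y) ≥ x}` in the extended reals
(`inf ∅ = ⊤ = +∞`). -/
noncomputable def dinv (d : ℝ → EReal) (x : ℝ) : EReal :=
  sInf (Real.toEReal '' {y : ℝ | (x : EReal) ≤ d y})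

/-- The cumulative distribution function `Ξ(x) = ∫_{-∞}^x ν`. -/
noncomputable def Xi (ν : ℝ → ℝ) (x : ℝ) : ℝ := ∫ y in Set.Iic x, ν y

/-- The left staircase boundary function `g_c`. -/
noncomputable def gc (ν Ξinv : ℝ → ℝ) (c : ℝ) (x : ℝ) : EReal :=
  if x ≤ Ξinv c then ⊥ else ((Ξinv (Xi ν x - c / 2) : ℝ) : EReal)

/-- The right staircase boundary function `d_c`. -/
noncomputable def dc (ν Ξinv : ℝ → ℝ) (c : ℝ) (x : ℝ) : EReal :=
  if x < Ξinv (1 - c) then ((Ξinv (Xi ν x + c / 2) : ℝ) : EReal) else ⊤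

/-- The Fisher information `I(c, α)` of the asymmetric staircase mechanism. -/
noncomputable def fisherStaircase (ν Ξinv p q : ℝ → ℝ) (c α : ℝ) : ℝ :=
  ∫ x₀,
    ((Real.exp α - 1) ^ 2 *
        (∫ x in {x : ℝ | gc ν Ξinv c x₀ ≤ (x : EReal) ∧ (x : EReal) ≤ dc ν Ξinv c x₀},
          q x) ^ 2 /
        (1 + (Real.exp α - 1) *
          ∫ x in {x : ℝ | gc ν Ξinv c x₀ ≤ (x : EReal) ∧ (x : EReal) ≤ dc ν Ξinv c x₀},
            p x)) *
      (ν x₀ / (1 + c * (Real.exp α - 1)))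

open Filter Set

section aux
variable {ν : ℝ → ℝ}

lemma Xi_Icc (hνint : Integrable ν) {a b : ℝ} (hab : a ≤ b) :
    ∫ x in Set.Icc a b, ν x = Xi ν b - Xi ν a := by
  have h1 : ∫ x in Set.Icc a b, ν x = ∫ x in Set.Ioc a b, ν x :=
    setIntegral_congr_set Ioc_ae_eq_Icc.symm
  have h2 := intervalIntegral.integral_Iic_sub_Iic (hνint.integrableOn (s := Set.Iic a))
    (hνint.integrableOn (s := Set.Iic b))
  rw [intervalIntegral.integral_of_le hab] at h2
  rw [h1, ← h2]; rfl

lemma Xi_strictMono (hνc : Continuous ν) (hνpos : ∀ x, 0 < ν x) (hνint : Integrable ν) :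
    StrictMono (Xi ν) := by
  intro x y hxy
  have h : ∫ t in Set.Icc x y, ν t = Xi ν y - Xi ν x := Xi_Icc hνint hxy.le
  have hpos : 0 < ∫ t in Set.Icc x y, ν t := by
    have h1 : ∫ t in Set.Icc x y, ν t = ∫ t in Set.Ioc x y, ν t :=
      setIntegral_congr_set Ioc_ae_eq_Icc.symm
    have : 0 < ∫ t in x..y, ν t :=
      intervalIntegral.intervalIntegral_pos_of_pos (hνint.intervalIntegrable) hνpos hxy
    rwa [intervalIntegral.integral_of_le hxy.le, ← h1] at this
  linarith

lemma Xi_pos (hνc : Continuous ν) (hνpos : ∀ x, 0 < ν x) (hνint : Integrable ν) (x : ℝ) :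
    0 < Xi ν x := by
  have h : Xi ν x - Xi ν (x - 1) > 0 := by
    have := Xi_strictMono hνc hνpos hνint (show x - 1 < x by linarith)
    linarith
  have h2 : 0 ≤ Xi ν (x - 1) :=
    setIntegral_nonneg measurableSet_Iic fun y _ => (hνpos y).le
  linarith

lemma Xi_lt_one (hνc : Continuous ν) (hνpos : ∀ x, 0 < ν x) (hνint : Integrable ν)
    (hν1 : ∫ x, ν x = 1) (x : ℝ) : Xi ν x < 1 := by
  have hsplit : Xi ν x + ∫ y in Set.Ioi x, ν y = 1 := by
    rw [Xi, ← hν1]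
    exact intervalIntegral.integral_Iic_add_Ioi (hνint.integrableOn) (hνint.integrableOn)
  have h1 : Xi ν (x + 1) - Xi ν x > 0 := by
    have := Xi_strictMono hνc hνpos hνint (show x < x + 1 by linarith)
    linarith
  have h2 : Xi ν (x + 1) - Xi ν x ≤ ∫ y in Set.Ioi x, ν y := by
    have hIcc : ∫ y in Set.Icc x (x+1), ν y = Xi ν (x+1) - Xi ν x :=
      Xi_Icc hνint (by linarith)
    have h3 : ∫ y in Set.Icc x (x+1), ν y = ∫ y in Set.Ioc x (x+1), ν y :=
      setIntegral_congr_set Ioc_ae_eq_Icc.symm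
    rw [← hIcc, h3]
    exact setIntegral_mono_set (hνint.integrableOn)
      (Filter.Eventually.of_forall fun y => (hνpos y).le)
      (HasSubset.Subset.eventuallyLE (fun y hy => hy.1))
  linarith

end aux

section inv
variable {ν Ξinv : ℝ → ℝ}

lemma Xinv_le_iff (hmono : StrictMono (Xi ν))
    (hΞ₁ : ∀ u ∈ Set.Ioo (0:ℝ) 1, Xi ν (Ξinv u) = u) {u x : ℝ} (hu : u ∈ Set.Ioo (0:ℝ) 1) :
    Ξinv u ≤ x ↔ u ≤ Xi ν x := by
  rw [← hmono.le_iff_le, hΞ₁ u hu]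

lemma le_Xinv_iff (hmono : StrictMono (Xi ν))
    (hΞ₁ : ∀ u ∈ Set.Ioo (0:ℝ) 1, Xi ν (Ξinv u) = u) {u x : ℝ} (hu : u ∈ Set.Ioo (0:ℝ) 1) :
    x ≤ Ξinv u ↔ Xi ν x ≤ u := by
  rw [← hmono.le_iff_le, hΞ₁ u hu]

/-- The interval characterization of the staircase acceptance set. -/
lemma mem_S_iff (hmono : StrictMono (Xi ν)) (hXioo : ∀ x, Xi ν x ∈ Set.Ioo (0:ℝ) 1)
    (hΞ₁ : ∀ u ∈ Set.Ioo (0:ℝ) 1, Xi ν (Ξinv u) = u) {c : ℝ} (hc : c ∈ Set.Ioo (0:ℝ) 1)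
    (x₀ x : ℝ) :
    (gc ν Ξinv c x₀ ≤ (x : EReal) ∧ (x : EReal) ≤ dc ν Ξinv c x₀) ↔
      ((Xi ν x₀ ≤ c ∨ Xi ν x₀ - c/2 ≤ Xi ν x) ∧
        (1 - c ≤ Xi ν x₀ ∨ Xi ν x ≤ Xi ν x₀ + c/2)) := by
  obtain ⟨hc0, hc1⟩ := hc
  obtain ⟨hx₀0, hx₀1⟩ := hXioo x₀
  have hcio : c ∈ Set.Ioo (0:ℝ) 1 := ⟨hc0, hc1⟩
  have h1cio : 1 - c ∈ Set.Ioo (0:ℝ) 1 := ⟨by linarith, by linarith⟩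
  constructor
  · rintro ⟨hg, hd⟩
    constructor
    · unfold gc at hg
      by_cases hx₀ : x₀ ≤ Ξinv c
      · exact Or.inl ((le_Xinv_iff hmono hΞ₁ hcio).1 hx₀)
      · rw [if_neg hx₀] at hg
        right
        have hxc : c < Xi ν x₀ := by
          by_contra hcon
          exact hx₀ ((le_Xinv_iff hmono hΞ₁ hcio).2 (not_lt.1 hcon))
        have harg : Xi ν x₀ - c/2 ∈ Set.Ioo (0:ℝ) 1 := ⟨by linarith, by linarith⟩
        have := EReal.coe_le_coe_iff.1 hg
        exact ((Xinv_le_iff hmono hΞ₁ harg).1 this).trans_eq rfl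
    · unfold dc at hd
      by_cases hx₀ : x₀ < Ξinv (1 - c)
      · rw [if_pos hx₀] at hd
        right
        have hxc : Xi ν x₀ < 1 - c := by
          by_contra hcon
          exact absurd ((Xinv_le_iff hmono hΞ₁ h1cio).2 (not_lt.1 hcon)) (not_le.2 hx₀)
        have harg : Xi ν x₀ + c/2 ∈ Set.Ioo (0:ℝ) 1 := ⟨by linarith, by linarith⟩
        have := EReal.coe_le_coe_iff.1 hd
        exact (le_Xinv_iff hmono hΞ₁ harg).1 this
      · left
        have : Ξinv (1 - c) ≤ x₀ := not_lt.1 hx₀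
        exact (Xinv_le_iff hmono hΞ₁ h1cio).1 this
  · rintro ⟨hg, hd⟩
    constructor
    · unfold gc
      by_cases hx₀ : x₀ ≤ Ξinv c
      · rw [if_pos hx₀]; exact bot_le
      · rw [if_neg hx₀]
        have hxc : c < Xi ν x₀ := by
          by_contra hcon
          exact hx₀ ((le_Xinv_iff hmono hΞ₁ hcio).2 (not_lt.1 hcon))
        have harg : Xi ν x₀ - c/2 ∈ Set.Ioo (0:ℝ) 1 := ⟨by linarith, by linarith⟩
        have hle : Xi ν x₀ - c/2 ≤ Xi ν x := by
          rcases hg with h | h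
          · linarith
          · exact h
        exact EReal.coe_le_coe_iff.2 ((Xinv_le_iff hmono hΞ₁ harg).2 hle)
    · unfold dc
      by_cases hx₀ : x₀ < Ξinv (1 - c)
      · rw [if_pos hx₀]
        have hxc : Xi ν x₀ < 1 - c := by
          by_contra hcon
          exact absurd ((Xinv_le_iff hmono hΞ₁ h1cio).2 (not_lt.1 hcon)) (not_le.2 hx₀)
        have harg : Xi ν x₀ + c/2 ∈ Set.Ioo (0:ℝ) 1 := ⟨by linarith, by linarith⟩
        have hle : Xi ν x ≤ Xi ν x₀ + c/2 := by
          rcases hd with h | h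
          · linarith
          · exact h
        exact EReal.coe_le_coe_iff.2 ((le_Xinv_iff hmono hΞ₁ harg).2 hle)
      · rw [if_neg hx₀]; exact le_top

end inv

section analytic

/-- If `q²/p` and `p` are integrable and `p > 0` a.e., then `q` is integrable. -/
lemma q_integrable {p q : ℝ → ℝ} (hq : Measurable q)
    (hppos : ∀ᵐ x ∂(volume : Measure ℝ), 0 < p x) (hpi : Integrable p)
    (hfin : Integrable (fun x => q x ^ 2 / p x)) : Integrable q := by
  refine Integrable.mono' ((hfin.add hpi).div_const 2) hq.aestronglyMeasurable ?_
  filter_upwards [hppos] with x hx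
  rw [Real.norm_eq_abs]
  have h : (|q x| - p x)^2 / p x ≥ 0 := div_nonneg (sq_nonneg _) hx.le
  have hq2 : q x ^ 2 = |q x|^2 := (sq_abs _).symm
  have hexp : (|q x| - p x)^2 / p x = q x ^2 / p x + p x - 2 * |q x| := by
    rw [hq2]; field_simp; rw [sub_sq, hq2.symm]; ring
  show |q x| ≤ (q x ^ 2 / p x + p x) / 2
  linarith [hexp ▸ h]

/-- Cauchy–Schwarz-type bound: `(∫_S q)² ≤ (∫_S q²/p) (∫_S p)`. -/
lemma cs_bound {p q : ℝ → ℝ}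
    (hppos : ∀ᵐ x ∂(volume : Measure ℝ), 0 < p x) (hpi : Integrable p)
    (hqi : Integrable q) (hfin : Integrable (fun x => q x ^ 2 / p x)) (S : Set ℝ) :
    (∫ x in S, q x) ^ 2 ≤ (∫ x in S, q x ^ 2 / p x) * (∫ x in S, p x) := by
  set Q := ∫ x in S, q x with hQ
  set P := ∫ x in S, p x with hP
  set R := ∫ x in S, q x ^ 2 / p x with hR
  have hP0 : 0 ≤ P := integral_nonneg_of_ae
    (ae_restrict_of_ae (by filter_upwards [hppos] with x hx using hx.le))
  have hR0 : 0 ≤ R := integral_nonneg_of_ae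
    (ae_restrict_of_ae (by filter_upwards [hppos] with x hx using div_nonneg (sq_nonneg _) hx.le))
  have key : ∀ t : ℝ, 2 * t * Q - t ^ 2 * P ≤ R := by
    intro t
    have hptw : ∀ᵐ x ∂(volume : Measure ℝ), 2 * t * q x - t ^ 2 * p x ≤ q x ^ 2 / p x := by
      filter_upwards [hppos] with x hx
      rw [le_div_iff₀ hx]
      nlinarith [sq_nonneg (q x - t * p x)]
    have h1 : ∫ x in S, (2 * t * q x - t ^ 2 * p x) ≤ R :=
      setIntegral_mono_ae ((hqi.const_mul _).sub (hpi.const_mul _)).integrableOn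
        hfin.integrableOn hptw
    rwa [integral_sub ((hqi.const_mul _).integrableOn) ((hpi.const_mul _).integrableOn),
      integral_const_mul, integral_const_mul] at h1
  rcases lt_or_eq_of_le hP0 with hPpos | hPzero
  · have := key (Q / P)
    have h2 : 2 * (Q / P) * Q - (Q / P) ^ 2 * P = Q ^ 2 / P := by
      field_simp; ring
    rw [h2, div_le_iff₀ hPpos] at this
    exact this
  · have hQ0 : Q = 0 := by
      by_contra hQne
      have := key ((R + 1) / Q)
      rw [← hPzero] at this
      field_simp at this
      rw [mul_zero, sub_zero, mul_div_assoc, mul_div_assoc, div_self (pow_ne_zero 2 hQne)] at this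
      linarith
    rw [hQ0, ← hPzero]; norm_num

/-- Shrinking-interval averages converge to the value at the point of continuity. -/
lemma shrink {f : ℝ → ℝ} {x₀ : ℝ} (hf : ContinuousAt f x₀) (hfi : Integrable f)
    {a b : ℕ → ℝ} (ha : Tendsto a atTop (nhds x₀)) (hb : Tendsto b atTop (nhds x₀))
    (hab : ∀ᶠ n in atTop, a n ≤ x₀ ∧ x₀ ≤ b n ∧ a n < b n) :
    Tendsto (fun n => (∫ x in Set.Icc (a n) (b n), f x) / (b n - a n)) atTop (nhds (f x₀)) := by
  rw [Metric.tendsto_nhds]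
  intro ε hε
  obtain ⟨δ, hδ, hδf⟩ := Metric.continuousAt_iff.1 hf (ε/2) (by linarith)
  have haev : ∀ᶠ n in atTop, a n ∈ Metric.ball x₀ δ := ha (Metric.ball_mem_nhds x₀ hδ)
  have hbev : ∀ᶠ n in atTop, b n ∈ Metric.ball x₀ δ := hb (Metric.ball_mem_nhds x₀ hδ)
  filter_upwards [haev, hbev, hab] with n han hbn habn
  obtain ⟨h1, h2, h3⟩ := habn
  have hL : 0 < b n - a n := by linarith
  have hvolfin : volume (Set.Icc (a n) (b n)) < ⊤ := by
    rw [Real.volume_Icc]; exact ENNReal.ofReal_lt_top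
  have hIcc_vol : (volume (Set.Icc (a n) (b n))).toReal = b n - a n := by
    rw [Real.volume_Icc, ENNReal.toReal_ofReal hL.le]
  have han' : |a n - x₀| < δ := by rw [← Real.dist_eq]; exact Metric.mem_ball.1 han
  have hbn' : |b n - x₀| < δ := by rw [← Real.dist_eq]; exact Metric.mem_ball.1 hbn
  rw [abs_sub_lt_iff] at han' hbn'
  have key : ∀ x ∈ Set.Icc (a n) (b n), ‖f x - f x₀‖ ≤ ε/2 := by
    intro x hx
    have : dist x x₀ < δ := by
      rw [Real.dist_eq, abs_sub_lt_iff]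
      constructor <;> [linarith [hx.2]; linarith [hx.1]]
    exact (hδf this).le
  have hbound := norm_setIntegral_le_of_norm_le_const (μ := volume)
    (s := Set.Icc (a n) (b n)) (f := fun x => f x - f x₀) (C := ε/2) hvolfin key
  rw [measureReal_def, hIcc_vol] at hbound
  have hconst : ∫ _ in Set.Icc (a n) (b n), f x₀ = (b n - a n) * f x₀ := by
    rw [setIntegral_const, measureReal_def, hIcc_vol, smul_eq_mul]
  have hsub : ∫ x in Set.Icc (a n) (b n), (f x - f x₀)
      = (∫ x in Set.Icc (a n) (b n), f x) - (b n - a n) * f x₀ := by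
    rw [integral_sub hfi.integrableOn (integrableOn_const hvolfin.ne), hconst]
  have habs : |(∫ x in Set.Icc (a n) (b n), f x) - (b n - a n) * f x₀| ≤ ε/2 * (b n - a n) := by
    rw [← hsub, ← Real.norm_eq_abs]; exact hbound
  rw [Real.dist_eq, show (∫ x in Set.Icc (a n) (b n), f x) / (b n - a n) - f x₀
      = ((∫ x in Set.Icc (a n) (b n), f x) - (b n - a n) * f x₀) / (b n - a n) from by
        field_simp, abs_div, abs_of_pos hL]
  calc |(∫ x in Set.Icc (a n) (b n), f x) - (b n - a n) * f x₀| / (b n - a n)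
      ≤ ε/2 := by rw [div_le_iff₀ hL]; exact habs
    _ < ε := by linarith

/-- `atTop` times a sequence with positive limit tends to `atTop`. -/
lemma atTop_mul_tendsto_pos {f g : ℕ → ℝ} {C : ℝ} (hC : 0 < C)
    (hf : Tendsto f atTop atTop) (hg : Tendsto g atTop (nhds C)) :
    Tendsto (fun n => f n * g n) atTop atTop := by
  have hgev : ∀ᶠ n in atTop, C/2 < g n := hg.eventually_const_lt (by linarith)
  have hfev : ∀ᶠ n in atTop, 0 ≤ f n := hf.eventually_ge_atTop 0
  refine tendsto_atTop_mono' atTop ?_ (hf.atTop_mul_const (show (0:ℝ) < C/2 by linarith))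
  filter_upwards [hgev, hfev] with n h1 h2
  exact mul_le_mul_of_nonneg_left h1.le h2

/-- `y/(1+y) → 1` when `y → ∞`. -/
lemma div_one_add_tendsto_one {y : ℕ → ℝ} (hy : Tendsto y atTop atTop) :
    Tendsto (fun n => y n / (1 + y n)) atTop (nhds 1) := by
  have h1 : Tendsto (fun n => 1 + y n) atTop atTop :=
    tendsto_atTop_add_const_left atTop 1 hy
  have h2 : Tendsto (fun n => (1 + y n)⁻¹) atTop (nhds 0) := h1.inv_tendsto_atTop
  have h3 : Tendsto (fun n => 1 - (1 + y n)⁻¹) atTop (nhds 1) := by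
    simpa using (tendsto_const_nhds (x := (1:ℝ))).sub h2
  apply h3.congr'
  filter_upwards [h1.eventually_ge_atTop 1] with n hn
  have : (1 : ℝ) + y n ≠ 0 := by linarith
  field_simp
  ring

end analytic

section prod
variable {T : Set (ℝ × ℝ)}

/-- Parametric set-integral over sections of a measurable set is strongly measurable. -/
lemma meas_param (hT : MeasurableSet T) {f : ℝ → ℝ} (hf : Measurable f) :
    StronglyMeasurable (fun x₀ => ∫ x in {x | (x₀, x) ∈ T}, f x) := by
  have h : StronglyMeasurable fun z : ℝ × ℝ => T.indicator (fun z => f z.2) z :=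
    ((hf.comp measurable_snd).indicator hT).stronglyMeasurable
  have h2 := h.integral_prod_right' (ν := volume)
  have h3 : (fun x₀ => ∫ x in {x | (x₀, x) ∈ T}, f x)
      = fun x₀ => ∫ x, T.indicator (fun z => f z.2) (x₀, x) := by
    funext x₀
    have hsec : MeasurableSet {x | (x₀, x) ∈ T} := measurable_prodMk_left hT
    rw [← integral_indicator hsec]
    congr 1
  rw [h3]; exact h2

/-- Tonelli step: swapping the order of integration for the staircase bound. -/
lemma tonelli_step (hT : MeasurableSet T) {w h : ℝ → ℝ} (hw : Measurable w)
    (hh : Measurable h) (hh0 : ∀ x, 0 ≤ h x) (hhi : Integrable h) :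
    ∫⁻ x₀, ENNReal.ofReal (w x₀) * ENNReal.ofReal (∫ x in {x | (x₀, x) ∈ T}, h x)
      = ∫⁻ x, ENNReal.ofReal (h x) * ∫⁻ x₀ in {x₀ | (x₀, x) ∈ T}, ENNReal.ofReal (w x₀) := by
  set G : ℝ × ℝ → ENNReal :=
    fun z => T.indicator (fun z => ENNReal.ofReal (w z.1) * ENNReal.ofReal (h z.2)) z with hG
  have hGmeas : Measurable G := by
    apply Measurable.indicator ?_ hT
    exact ((ENNReal.measurable_ofReal.comp (hw.comp measurable_fst)).mul
      (ENNReal.measurable_ofReal.comp (hh.comp measurable_snd)))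
  have step1 : ∀ x₀ : ℝ, ENNReal.ofReal (w x₀) * ENNReal.ofReal (∫ x in {x | (x₀, x) ∈ T}, h x)
      = ∫⁻ x, G (x₀, x) := by
    intro x₀
    have hsec : MeasurableSet {x | (x₀, x) ∈ T} := measurable_prodMk_left hT
    rw [ofReal_integral_eq_lintegral_ofReal hhi.integrableOn
      (ae_restrict_of_ae (Eventually.of_forall fun x => hh0 x)),
      ← lintegral_indicator hsec, ← lintegral_const_mul _
        (hh.ennreal_ofReal.indicator hsec)]
    congr 1
    funext x
    by_cases hmem : (x₀, x) ∈ T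
    · simp [G, Set.indicator, hmem]
    · simp [G, Set.indicator, hmem]
  have step3 : ∀ x : ℝ, (∫⁻ x₀, G (x₀, x))
      = ENNReal.ofReal (h x) * ∫⁻ x₀ in {x₀ | (x₀, x) ∈ T}, ENNReal.ofReal (w x₀) := by
    intro x
    have hsec : MeasurableSet {x₀ | (x₀, x) ∈ T} := measurable_prodMk_right hT
    rw [← lintegral_indicator hsec, ← lintegral_const_mul _
        (hw.ennreal_ofReal.indicator hsec)]
    congr 1
    funext x₀
    by_cases hmem : (x₀, x) ∈ T
    · simp [G, Set.indicator, hmem, mul_comm]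
    · simp [G, Set.indicator, hmem]
  calc ∫⁻ x₀, ENNReal.ofReal (w x₀) * ENNReal.ofReal (∫ x in {x | (x₀, x) ∈ T}, h x)
      = ∫⁻ x₀, ∫⁻ x, G (x₀, x) := by simp only [step1]
    _ = ∫⁻ x, ∫⁻ x₀, G (x₀, x) := lintegral_lintegral_swap hGmeas.aemeasurable
    _ = ∫⁻ x, ENNReal.ofReal (h x) * ∫⁻ x₀ in {x₀ | (x₀, x) ∈ T}, ENNReal.ofReal (w x₀) := by
        simp only [step3]

end prod


section secm
variable {ν Ξinv : ℝ → ℝ}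

/-- The staircase acceptance region as a subset of the product space. -/
def Tset (ν : ℝ → ℝ) (c : ℝ) : Set (ℝ × ℝ) :=
  {z | (Xi ν z.1 ≤ c ∨ Xi ν z.1 - c/2 ≤ Xi ν z.2) ∧
    (1 - c ≤ Xi ν z.1 ∨ Xi ν z.2 ≤ Xi ν z.1 + c/2)}

lemma Tset_measurable (hmono : StrictMono (Xi ν)) (c : ℝ) : MeasurableSet (Tset ν c) := by
  have hXm : Measurable (Xi ν) := hmono.monotone.measurable
  have h1 : Measurable fun z : ℝ × ℝ => Xi ν z.1 := hXm.comp measurable_fst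
  have h2 : Measurable fun z : ℝ × ℝ => Xi ν z.2 := hXm.comp measurable_snd
  have hset : Tset ν c = ({z : ℝ × ℝ | Xi ν z.1 ≤ c} ∪ {z | Xi ν z.1 - c/2 ≤ Xi ν z.2}) ∩
      ({z : ℝ × ℝ | 1 - c ≤ Xi ν z.1} ∪ {z | Xi ν z.2 ≤ Xi ν z.1 + c/2}) := by
    ext z; simp only [Tset, Set.mem_setOf_eq, Set.mem_inter_iff, Set.mem_union]
  rw [hset]
  exact ((measurableSet_le h1 measurable_const).union
      (measurableSet_le (h1.sub measurable_const) h2)).inter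
    ((measurableSet_le measurable_const h1).union
      (measurableSet_le h2 (h1.add measurable_const)))

lemma int_Ici (hνint : Integrable ν) (hν1 : ∫ x, ν x = 1) (t : ℝ) :
    ∫ x in Set.Ici t, ν x = 1 - Xi ν t := by
  have h := intervalIntegral.integral_Iic_add_Ioi (b := t)
    (hνint.integrableOn) (hνint.integrableOn) (μ := volume)
  have h2 : ∫ x in Set.Ici t, ν x = ∫ x in Set.Ioi t, ν x :=
    setIntegral_congr_set Ioi_ae_eq_Ici.symm
  rw [h2]; rw [hν1] at h; unfold Xi; linarith

lemma lint_ofReal_set (hνpos : ∀ x, 0 < ν x) (hνint : Integrable ν) (A : Set ℝ) :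
    ∫⁻ x₀ in A, ENNReal.ofReal (ν x₀) = ENNReal.ofReal (∫ x₀ in A, ν x₀) :=
  (ofReal_integral_eq_lintegral_ofReal hνint.integrableOn
    (ae_restrict_of_ae (Eventually.of_forall fun x => (hνpos x).le))).symm

/-- The section measure is at most `c`. -/
lemma m_le (hνc : Continuous ν) (hνpos : ∀ x, 0 < ν x) (hνint : Integrable ν)
    (hν1 : ∫ x, ν x = 1)
    (hΞ₁ : ∀ u ∈ Set.Ioo (0:ℝ) 1, Xi ν (Ξinv u) = u) {c : ℝ} (hc : c ∈ Set.Ioo (0:ℝ) 1)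
    (x : ℝ) :
    ∫⁻ x₀ in {x₀ | (x₀, x) ∈ Tset ν c}, ENNReal.ofReal (ν x₀) ≤ ENNReal.ofReal c := by
  have hmono := Xi_strictMono hνc hνpos hνint
  have hXioo : ∀ y, Xi ν y ∈ Set.Ioo (0:ℝ) 1 :=
    fun y => ⟨Xi_pos hνc hνpos hνint y, Xi_lt_one hνc hνpos hνint hν1 y⟩
  obtain ⟨hc0, hc1⟩ := hc
  set u := Xi ν x with hu
  rcases le_or_gt u (c/2) with hcase | hcase1
  · -- low case : section ⊆ Iic (Ξinv c)
    have hsub : {x₀ | (x₀, x) ∈ Tset ν c} ⊆ Set.Iic (Ξinv c) := by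
      intro x₀ hx₀
      have h1 : Xi ν x₀ ≤ c := by
        rcases hx₀.1 with h | h
        · exact h
        · linarith
      exact (le_Xinv_iff hmono hΞ₁ ⟨hc0, hc1⟩).2 h1
    calc ∫⁻ x₀ in {x₀ | (x₀, x) ∈ Tset ν c}, ENNReal.ofReal (ν x₀)
        ≤ ∫⁻ x₀ in Set.Iic (Ξinv c), ENNReal.ofReal (ν x₀) := lintegral_mono_set hsub
      _ = ENNReal.ofReal (∫ x₀ in Set.Iic (Ξinv c), ν x₀) := lint_ofReal_set hνpos hνint _
      _ = ENNReal.ofReal c := by rw [show ∫ x₀ in Set.Iic (Ξinv c), ν x₀ = Xi ν (Ξinv c) from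
            rfl, hΞ₁ c ⟨hc0, hc1⟩]
  rcases le_or_gt (1 - c/2) u with hcase2 | hcase2
  · -- high case : section ⊆ Ici (Ξinv (1-c))
    have hsub : {x₀ | (x₀, x) ∈ Tset ν c} ⊆ Set.Ici (Ξinv (1 - c)) := by
      intro x₀ hx₀
      have h1 : 1 - c ≤ Xi ν x₀ := by
        rcases hx₀.2 with h | h
        · exact h
        · linarith
      exact (Xinv_le_iff hmono hΞ₁ ⟨by linarith, by linarith⟩).2 h1
    calc ∫⁻ x₀ in {x₀ | (x₀, x) ∈ Tset ν c}, ENNReal.ofReal (ν x₀)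
        ≤ ∫⁻ x₀ in Set.Ici (Ξinv (1 - c)), ENNReal.ofReal (ν x₀) := lintegral_mono_set hsub
      _ = ENNReal.ofReal (∫ x₀ in Set.Ici (Ξinv (1 - c)), ν x₀) := lint_ofReal_set hνpos hνint _
      _ ≤ ENNReal.ofReal c := by
          rw [int_Ici hνint hν1, hΞ₁ (1 - c) ⟨by linarith, by linarith⟩]
          exact ENNReal.ofReal_le_ofReal (by linarith)
  · -- middle case
    have hu1 : u - c/2 ∈ Set.Ioo (0:ℝ) 1 := ⟨by linarith, by linarith [(hXioo x).2]⟩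
    have hu2 : u + c/2 ∈ Set.Ioo (0:ℝ) 1 := ⟨by linarith [(hXioo x).1], by linarith⟩
    have hsub : {x₀ | (x₀, x) ∈ Tset ν c} ⊆ Set.Icc (Ξinv (u - c/2)) (Ξinv (u + c/2)) := by
      intro x₀ hx₀
      constructor
      · have h1 : u - c/2 ≤ Xi ν x₀ := by
          rcases hx₀.2 with h | h
          · linarith
          · linarith
        exact (Xinv_le_iff hmono hΞ₁ hu1).2 h1
      · have h1 : Xi ν x₀ ≤ u + c/2 := by
          rcases hx₀.1 with h | h
          · linarith
          · linarith
        exact (le_Xinv_iff hmono hΞ₁ hu2).2 h1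
    have hab : Ξinv (u - c/2) ≤ Ξinv (u + c/2) := by
      rw [← hmono.le_iff_le, hΞ₁ _ hu1, hΞ₁ _ hu2]; linarith
    calc ∫⁻ x₀ in {x₀ | (x₀, x) ∈ Tset ν c}, ENNReal.ofReal (ν x₀)
        ≤ ∫⁻ x₀ in Set.Icc (Ξinv (u - c/2)) (Ξinv (u + c/2)), ENNReal.ofReal (ν x₀) :=
          lintegral_mono_set hsub
      _ = ENNReal.ofReal (∫ x₀ in Set.Icc (Ξinv (u - c/2)) (Ξinv (u + c/2)), ν x₀) :=
          lint_ofReal_set hνpos hνint _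
      _ = ENNReal.ofReal c := by
          rw [Xi_Icc hνint hab, hΞ₁ _ hu1, hΞ₁ _ hu2]
          norm_num

/-- The section measure equals `c` in the middle region. -/
lemma m_eq (hνc : Continuous ν) (hνpos : ∀ x, 0 < ν x) (hνint : Integrable ν)
    (hν1 : ∫ x, ν x = 1)
    (hΞ₁ : ∀ u ∈ Set.Ioo (0:ℝ) 1, Xi ν (Ξinv u) = u) {c : ℝ} (hc : c ∈ Set.Ioo (0:ℝ) 1)
    {x : ℝ} (h1 : c/2 < Xi ν x) (h2 : Xi ν x < 1 - c/2) :
    ∫⁻ x₀ in {x₀ | (x₀, x) ∈ Tset ν c}, ENNReal.ofReal (ν x₀) = ENNReal.ofReal c := by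
  have hmono := Xi_strictMono hνc hνpos hνint
  obtain ⟨hc0, hc1⟩ := hc
  set u := Xi ν x with hu
  have hu1 : u - c/2 ∈ Set.Ioo (0:ℝ) 1 := ⟨by linarith, by linarith⟩
  have hu2 : u + c/2 ∈ Set.Ioo (0:ℝ) 1 := ⟨by linarith, by linarith⟩
  have hset : {x₀ | (x₀, x) ∈ Tset ν c} = Set.Icc (Ξinv (u - c/2)) (Ξinv (u + c/2)) := by
    ext x₀
    simp only [Set.mem_setOf_eq, Set.mem_Icc, Tset]
    rw [Xinv_le_iff hmono hΞ₁ hu1, le_Xinv_iff hmono hΞ₁ hu2]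
    constructor
    · rintro ⟨ha, hb⟩
      constructor
      · rcases hb with h | h
        · linarith
        · linarith
      · rcases ha with h | h
        · linarith
        · linarith
    · rintro ⟨ha, hb⟩
      exact ⟨Or.inr (by linarith), Or.inr (by linarith)⟩
  have hab : Ξinv (u - c/2) ≤ Ξinv (u + c/2) := by
    rw [← hmono.le_iff_le, hΞ₁ _ hu1, hΞ₁ _ hu2]; linarith
  rw [hset, lint_ofReal_set hνpos hνint, Xi_Icc hνint hab, hΞ₁ _ hu1, hΞ₁ _ hu2]
  norm_num

end secm


set_option maxHeartbeats 2000000 in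
theorem asymmetric_staircase_recovers_full_fisher_information
    (ν : ℝ → ℝ) (hνc : Continuous ν) (hνpos : ∀ x, 0 < ν x)
    (hνint : Integrable ν) (hν1 : ∫ x, ν x = 1)
    (Ξinv : ℝ → ℝ)
    (hΞ₁ : ∀ u ∈ Set.Ioo (0 : ℝ) 1, Xi ν (Ξinv u) = u)
    (hΞ₂ : ∀ x : ℝ, Ξinv (Xi ν x) = x)
    (p : ℝ → ℝ) (hp : Measurable p) (hp0 : ∀ x, 0 ≤ p x) (hp1 : ∫ x, p x = 1)
    (hppos : ∀ᵐ x ∂(volume : Measure ℝ), 0 < p x)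
    (hpc : ∀ᵐ x ∂(volume : Measure ℝ), ContinuousAt p x)
    (q : ℝ → ℝ) (hq : Measurable q)
    (hqc : ∀ᵐ x ∂(volume : Measure ℝ), ContinuousAt q x)
    (hfin : Integrable (fun x => q x ^ 2 / p x))
    (cs : ℕ → ℝ) (hcs : ∀ n, cs n ∈ Set.Ioo (0 : ℝ) (1 / 2))
    (hcs0 : Filter.Tendsto cs Filter.atTop (nhds 0))
    (as : ℕ → ℝ) (has : ∀ n, 0 < as n)
    (hca : Filter.Tendsto (fun n => cs n * Real.exp (as n)) Filter.atTop Filter.atTop) :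
    Filter.Tendsto (fun n => fisherStaircase ν Ξinv p q (cs n) (as n))
      Filter.atTop (nhds (∫ x, q x ^ 2 / p x)) := by
  classical
  have hmono : StrictMono (Xi ν) := Xi_strictMono hνc hνpos hνint
  have hXioo : ∀ y, Xi ν y ∈ Set.Ioo (0:ℝ) 1 :=
    fun y => ⟨Xi_pos hνc hνpos hνint y, Xi_lt_one hνc hνpos hνint hν1 y⟩
  have hpi : Integrable p := by
    by_contra hcon
    rw [integral_undef hcon] at hp1; norm_num at hp1
  have hqi : Integrable q := q_integrable hq hppos hpi hfin
  set h : ℝ → ℝ := fun x => q x ^ 2 / p x with hh_def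
  have hh0 : ∀ x, 0 ≤ h x := fun x => div_nonneg (sq_nonneg _) (hp0 x)
  have hhm : Measurable h := (hq.pow_const 2).div hp
  set E : ℕ → ℝ := fun n => Real.exp (as n) - 1 with hE_def
  have hEpos : ∀ n, 0 < E n := fun n => by
    have : (1:ℝ) < Real.exp (as n) := by
      rw [← Real.exp_zero]; exact Real.exp_lt_exp.2 (has n)
    simp only [hE_def]; linarith
  have hcio : ∀ n, cs n ∈ Set.Ioo (0:ℝ) 1 :=
    fun n => ⟨(hcs n).1, lt_trans (hcs n).2 (by norm_num)⟩
  have hcEpos : ∀ n, 0 < 1 + cs n * E n :=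
    fun n => by have := mul_pos (hcio n).1 (hEpos n); linarith
  set S : ℕ → ℝ → Set ℝ := fun n x₀ =>
    {x | gc ν Ξinv (cs n) x₀ ≤ (x : EReal) ∧ (x : EReal) ≤ dc ν Ξinv (cs n) x₀} with hS_def
  have hSsec : ∀ n x₀, S n x₀ = {x | (x₀, x) ∈ Tset ν (cs n)} := by
    intro n x₀
    ext x
    rw [hS_def]
    exact mem_S_iff hmono hXioo hΞ₁ (hcio n) x₀ x
  set Q : ℕ → ℝ → ℝ := fun n x₀ => ∫ x in S n x₀, q x with hQ_def
  set P : ℕ → ℝ → ℝ := fun n x₀ => ∫ x in S n x₀, p x with hP_def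
  set R : ℕ → ℝ → ℝ := fun n x₀ => ∫ x in S n x₀, h x with hR_def
  set F : ℕ → ℝ → ℝ := fun n x₀ =>
    E n ^ 2 * Q n x₀ ^ 2 / (1 + E n * P n x₀) * (ν x₀ / (1 + cs n * E n)) with hF_def
  have hfisher : ∀ n, fisherStaircase ν Ξinv p q (cs n) (as n) = ∫ x₀, F n x₀ := fun n => rfl
  have hP0 : ∀ n x₀, 0 ≤ P n x₀ := fun n x₀ =>
    integral_nonneg_of_ae (ae_restrict_of_ae (Eventually.of_forall fun x => hp0 x))
  have hR0 : ∀ n x₀, 0 ≤ R n x₀ := fun n x₀ =>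
    integral_nonneg_of_ae (ae_restrict_of_ae (Eventually.of_forall fun x => hh0 x))
  have hD1pos : ∀ n x₀, 0 < 1 + E n * P n x₀ := fun n x₀ => by
    have := mul_nonneg (hEpos n).le (hP0 n x₀); linarith
  have hF0 : ∀ n x₀, 0 ≤ F n x₀ := fun n x₀ =>
    mul_nonneg (div_nonneg (by positivity) (hD1pos n x₀).le)
      (div_nonneg (hνpos x₀).le (hcEpos n).le)
  -- measurability
  have hTmeas : ∀ n, MeasurableSet (Tset ν (cs n)) := fun n => Tset_measurable hmono _
  have hQm : ∀ n, Measurable (Q n) := by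
    intro n
    have heq : (fun x₀ => ∫ x in {x | (x₀, x) ∈ Tset ν (cs n)}, q x) = Q n := by
      funext x₀
      show _ = ∫ x in S n x₀, q x
      rw [hSsec n x₀]
    exact heq ▸ (meas_param (hTmeas n) hq).measurable
  have hPm : ∀ n, Measurable (P n) := by
    intro n
    have heq : (fun x₀ => ∫ x in {x | (x₀, x) ∈ Tset ν (cs n)}, p x) = P n := by
      funext x₀
      show _ = ∫ x in S n x₀, p x
      rw [hSsec n x₀]
    exact heq ▸ (meas_param (hTmeas n) hp).measurable
  have hRm : ∀ n, Measurable (R n) := by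
    intro n
    have heq : (fun x₀ => ∫ x in {x | (x₀, x) ∈ Tset ν (cs n)}, h x) = R n := by
      funext x₀
      show _ = ∫ x in S n x₀, h x
      rw [hSsec n x₀]
    exact heq ▸ (meas_param (hTmeas n) hhm).measurable
  have hFm : ∀ n, Measurable (F n) := by
    intro n
    exact ((measurable_const.mul ((hQm n).pow_const 2)).div
        (measurable_const.add (measurable_const.mul (hPm n)))).mul
      (hνc.measurable.div_const _)
  -- ENNReal quantities
  set H : ENNReal := ∫⁻ x, ENNReal.ofReal (h x) with hH_def
  have hH : H = ENNReal.ofReal (∫ x, h x) :=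
    (ofReal_integral_eq_lintegral_ofReal hfin (Eventually.of_forall hh0)).symm
  have hHne : H ≠ ⊤ := by rw [hH]; exact ENNReal.ofReal_ne_top
  set m : ℕ → ℝ → ENNReal := fun n x =>
    ∫⁻ x₀ in {x₀ | (x₀, x) ∈ Tset ν (cs n)}, ENNReal.ofReal (ν x₀) with hm_def
  set B : ℕ → ENNReal := fun n => ∫⁻ x, ENNReal.ofReal (h x) * m n x with hB_def
  set K : ℕ → ENNReal := fun n => ENNReal.ofReal (E n / (1 + cs n * E n)) with hK_def
  have hmm : ∀ n, Measurable (m n) := by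
    intro n
    have hgm : Measurable fun z : ℝ × ℝ =>
        (Tset ν (cs n)).indicator (fun z => ENNReal.ofReal (ν z.1)) z :=
      (hνc.measurable.comp measurable_fst).ennreal_ofReal.indicator (hTmeas n)
    have heq : (fun x => ∫⁻ x₀,
        (Tset ν (cs n)).indicator (fun z => ENNReal.ofReal (ν z.1)) (x₀, x)) = m n := by
      funext x
      have hsec : MeasurableSet {x₀ | (x₀, x) ∈ Tset ν (cs n)} :=
        measurable_prodMk_right (hTmeas n)
      show _ = ∫⁻ x₀ in {x₀ | (x₀, x) ∈ Tset ν (cs n)}, ENNReal.ofReal (ν x₀)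
      rw [← lintegral_indicator hsec]
      congr 1
    exact heq ▸ (hgm.lintegral_prod_left' (μ := volume))
  -- Cauchy–Schwarz domination
  have hFle : ∀ n x₀, F n x₀ ≤ E n / (1 + cs n * E n) * (ν x₀ * R n x₀) := by
    intro n x₀
    have hq2 : Q n x₀ ^ 2 ≤ R n x₀ * P n x₀ := cs_bound hppos hpi hqi hfin (S n x₀)
    have key : E n ^ 2 * Q n x₀ ^ 2 / (1 + E n * P n x₀) ≤ E n * R n x₀ := by
      rw [div_le_iff₀ (hD1pos n x₀)]
      nlinarith [hEpos n, hR0 n x₀, hP0 n x₀, sq_nonneg (E n)]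
    calc F n x₀ ≤ (E n * R n x₀) * (ν x₀ / (1 + cs n * E n)) :=
          mul_le_mul_of_nonneg_right key (div_nonneg (hνpos x₀).le (hcEpos n).le)
      _ = E n / (1 + cs n * E n) * (ν x₀ * R n x₀) := by ring
  -- per-n lintegral bound via Tonelli
  have hRsec : ∀ n x₀, R n x₀ = ∫ x in {x | (x₀, x) ∈ Tset ν (cs n)}, h x := by
    intro n x₀
    have : R n x₀ = ∫ x in S n x₀, h x := rfl
    rw [this, hSsec n x₀]
  have hchain : ∀ n, (∫⁻ x₀, ENNReal.ofReal (F n x₀)) ≤ K n * B n := by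
    intro n
    have step1 : (∫⁻ x₀, ENNReal.ofReal (F n x₀))
        ≤ ∫⁻ x₀, K n * (ENNReal.ofReal (ν x₀) * ENNReal.ofReal (R n x₀)) := by
      apply lintegral_mono
      intro x₀
      have h1 := hFle n x₀
      calc ENNReal.ofReal (F n x₀) ≤ ENNReal.ofReal (E n / (1 + cs n * E n) * (ν x₀ * R n x₀)) :=
            ENNReal.ofReal_le_ofReal h1
        _ = K n * (ENNReal.ofReal (ν x₀) * ENNReal.ofReal (R n x₀)) := by
            rw [hK_def, ENNReal.ofReal_mul (div_nonneg (hEpos n).le (hcEpos n).le),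
              ENNReal.ofReal_mul (hνpos x₀).le]
    have step2 : (∫⁻ x₀, K n * (ENNReal.ofReal (ν x₀) * ENNReal.ofReal (R n x₀)))
        = K n * ∫⁻ x₀, ENNReal.ofReal (ν x₀) * ENNReal.ofReal (R n x₀) :=
      lintegral_const_mul _ (hνc.measurable.ennreal_ofReal.mul (hRm n).ennreal_ofReal)
    have step3 : (∫⁻ x₀, ENNReal.ofReal (ν x₀) * ENNReal.ofReal (R n x₀)) = B n := by
      have htone := tonelli_step (hTmeas n) hνc.measurable hhm hh0 hfin
      have hlhs : (∫⁻ x₀, ENNReal.ofReal (ν x₀) * ENNReal.ofReal (R n x₀))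
          = ∫⁻ x₀, ENNReal.ofReal (ν x₀) *
              ENNReal.ofReal (∫ x in {x | (x₀, x) ∈ Tset ν (cs n)}, h x) := by
        apply lintegral_congr
        intro x₀
        rw [hRsec n x₀]
      rw [hlhs, htone]
    rw [← step3, ← step2]
    exact step1
  -- B and K*B bounds ; upper limit
  have hmle : ∀ n x, m n x ≤ ENNReal.ofReal (cs n) := fun n x =>
    m_le hνc hνpos hνint hν1 hΞ₁ (hcio n) x
  have hKc : ∀ n, K n * ENNReal.ofReal (cs n) ≤ 1 := by
    intro n
    rw [hK_def, ← ENNReal.ofReal_mul (div_nonneg (hEpos n).le (hcEpos n).le)]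
    apply ENNReal.ofReal_le_one.2
    rw [div_mul_eq_mul_div, div_le_one (hcEpos n)]
    nlinarith [hEpos n, (hcio n).1]
  have hKBle : ∀ n, K n * B n ≤ H := by
    intro n
    have hBle : B n ≤ ENNReal.ofReal (cs n) * H := by
      have h1 : B n ≤ ∫⁻ x, ENNReal.ofReal (cs n) * ENNReal.ofReal (h x) := by
        apply lintegral_mono
        intro x
        calc ENNReal.ofReal (h x) * m n x
            ≤ ENNReal.ofReal (h x) * ENNReal.ofReal (cs n) := mul_le_mul_right (hmle n x) _
          _ = ENNReal.ofReal (cs n) * ENNReal.ofReal (h x) := mul_comm _ _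
      calc B n ≤ ∫⁻ x, ENNReal.ofReal (cs n) * ENNReal.ofReal (h x) := h1
        _ = ENNReal.ofReal (cs n) * H := lintegral_const_mul _ hhm.ennreal_ofReal
    calc K n * B n ≤ K n * (ENNReal.ofReal (cs n) * H) := mul_le_mul_right hBle _
      _ = (K n * ENNReal.ofReal (cs n)) * H := (mul_assoc _ _ _).symm
      _ ≤ 1 * H := mul_le_mul_left (hKc n) _
      _ = H := one_mul H
  have hy : Filter.Tendsto (fun n => cs n * E n) Filter.atTop Filter.atTop := by
    have := hca.atTop_add (hcs0.neg)
    apply this.congr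
    intro n; rw [hE_def]; ring
  have hU : Filter.Tendsto (fun n => K n * B n) Filter.atTop (nhds H) := by
    have heq : ∀ n, K n * B n = ∫⁻ x, K n * (ENNReal.ofReal (h x) * m n x) := by
      intro n
      exact (lintegral_const_mul _ (hhm.ennreal_ofReal.mul (hmm n))).symm
    have hdom := tendsto_lintegral_of_dominated_convergence
      (μ := volume) (F := fun n x => K n * (ENNReal.ofReal (h x) * m n x))
      (f := fun x => ENNReal.ofReal (h x)) (fun x => ENNReal.ofReal (h x))
      (fun n => (measurable_const.mul (hhm.ennreal_ofReal.mul (hmm n))))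
      (fun n => Eventually.of_forall fun x => by
        calc K n * (ENNReal.ofReal (h x) * m n x)
            ≤ K n * (ENNReal.ofReal (h x) * ENNReal.ofReal (cs n)) :=
              mul_le_mul_right (mul_le_mul_right (hmle n x) _) _
          _ = (K n * ENNReal.ofReal (cs n)) * ENNReal.ofReal (h x) := by ring
          _ ≤ 1 * ENNReal.ofReal (h x) := mul_le_mul_left (hKc n) _
          _ = ENNReal.ofReal (h x) := one_mul _)
      (by rw [← hH_def]; exact hHne)
      (Eventually.of_forall fun x => by
        -- pointwise convergence of the upper bound integrand
        have hrealt : Filter.Tendsto (fun n => (cs n * E n) / (1 + cs n * E n) * h x)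
            Filter.atTop (nhds (h x)) := by
          have := (div_one_add_tendsto_one hy).mul_const (h x)
          rwa [one_mul] at this
        have hofreal : Filter.Tendsto
            (fun n => ENNReal.ofReal ((cs n * E n) / (1 + cs n * E n) * h x))
            Filter.atTop (nhds (ENNReal.ofReal (h x))) :=
          (ENNReal.continuous_ofReal.tendsto _).comp hrealt
        apply hofreal.congr'
        have hhalf : Filter.Tendsto (fun n => cs n / 2) Filter.atTop (nhds 0) := by
          simpa using hcs0.div_const 2
        have hev1 : ∀ᶠ n in Filter.atTop, cs n / 2 < Xi ν x :=
          hhalf.eventually_lt_const (hXioo x).1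
        have hev2 : ∀ᶠ n in Filter.atTop, cs n / 2 < 1 - Xi ν x :=
          hhalf.eventually_lt_const (by linarith [(hXioo x).2])
        filter_upwards [hev1, hev2] with n h1 h2
        have hmx : m n x = ENNReal.ofReal (cs n) :=
          m_eq hνc hνpos hνint hν1 hΞ₁ (hcio n) h1 (by linarith)
        rw [hmx]
        show ENNReal.ofReal (cs n * E n / (1 + cs n * E n) * h x)
          = ENNReal.ofReal (E n / (1 + cs n * E n)) *
            (ENNReal.ofReal (h x) * ENNReal.ofReal (cs n))
        rw [← ENNReal.ofReal_mul (hh0 x),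
          ← ENNReal.ofReal_mul (div_nonneg (hEpos n).le (hcEpos n).le)]
        congr 1
        ring)
    exact Filter.Tendsto.congr (fun n => (heq n).symm) hdom
  -- pointwise a.e. convergence of F
  have hptw : ∀ᵐ x₀ ∂(volume : Measure ℝ),
      Filter.Tendsto (fun n => F n x₀) Filter.atTop (nhds (h x₀)) := by
    filter_upwards [hpc, hqc, hppos] with x₀ hpx hqx hp0x
    obtain ⟨hu0, hu1⟩ := hXioo x₀
    set a : ℕ → ℝ := fun n => Ξinv (Xi ν x₀ - cs n / 2) with ha_def
    set b : ℕ → ℝ := fun n => Ξinv (Xi ν x₀ + cs n / 2) with hb_def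
    have hev1 : ∀ᶠ n in Filter.atTop, cs n < Xi ν x₀ := hcs0.eventually_lt_const hu0
    have hev2 : ∀ᶠ n in Filter.atTop, cs n < 1 - Xi ν x₀ :=
      hcs0.eventually_lt_const (by linarith)
    have hmemu1 : ∀ n, cs n < Xi ν x₀ → Xi ν x₀ - cs n / 2 ∈ Set.Ioo (0:ℝ) 1 :=
      fun n hn => ⟨by linarith [(hcio n).1], by linarith [(hcio n).1]⟩
    have hmemu2 : ∀ n, cs n < 1 - Xi ν x₀ → Xi ν x₀ + cs n / 2 ∈ Set.Ioo (0:ℝ) 1 :=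
      fun n hn => ⟨by linarith [(hcio n).1], by linarith [(hcio n).1]⟩
    have hXa : ∀ᶠ n in Filter.atTop, Xi ν (a n) = Xi ν x₀ - cs n / 2 := by
      filter_upwards [hev1] with n hn
      exact hΞ₁ _ (hmemu1 n hn)
    have hXb : ∀ᶠ n in Filter.atTop, Xi ν (b n) = Xi ν x₀ + cs n / 2 := by
      filter_upwards [hev2] with n hn
      exact hΞ₁ _ (hmemu2 n hn)
    have hab : ∀ᶠ n in Filter.atTop, a n ≤ x₀ ∧ x₀ ≤ b n ∧ a n < b n := by
      filter_upwards [hXa, hXb] with n h1 h2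
      have h3 : a n < x₀ := hmono.lt_iff_lt.1 (by rw [h1]; linarith [(hcio n).1])
      have h4 : x₀ < b n := hmono.lt_iff_lt.1 (by rw [h2]; linarith [(hcio n).1])
      exact ⟨h3.le, h4.le, h3.trans h4⟩
    have hhalf : Filter.Tendsto (fun n => cs n / 2) Filter.atTop (nhds 0) := by
      simpa using hcs0.div_const 2
    have ha_tend : Filter.Tendsto a Filter.atTop (nhds x₀) := by
      rw [tendsto_order]
      constructor
      · intro l hl
        have hXl : Xi ν l < Xi ν x₀ := hmono hl
        have hevl : ∀ᶠ n in Filter.atTop, cs n / 2 < Xi ν x₀ - Xi ν l :=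
          hhalf.eventually_lt_const (by linarith)
        filter_upwards [hevl, hXa] with n hn h1
        exact hmono.lt_iff_lt.1 (by rw [h1]; linarith)
      · intro u hu
        filter_upwards [hab] with n hn
        exact lt_of_le_of_lt hn.1 hu
    have hb_tend : Filter.Tendsto b Filter.atTop (nhds x₀) := by
      rw [tendsto_order]
      constructor
      · intro l hl
        filter_upwards [hab] with n hn
        exact lt_of_lt_of_le hl hn.2.1
      · intro u hu
        have hXu : Xi ν x₀ < Xi ν u := hmono hu
        have hevu : ∀ᶠ n in Filter.atTop, cs n / 2 < Xi ν u - Xi ν x₀ :=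
          hhalf.eventually_lt_const (by linarith)
        filter_upwards [hevu, hXb] with n hn h2
        exact hmono.lt_iff_lt.1 (by rw [h2]; linarith)
    have hQr := shrink hqx hqi ha_tend hb_tend hab
    have hPr := shrink hpx hpi ha_tend hb_tend hab
    have hNr := shrink hνc.continuousAt hνint ha_tend hb_tend hab
    have hcratio : Filter.Tendsto (fun n => cs n / (b n - a n)) Filter.atTop
        (nhds (ν x₀)) := by
      apply hNr.congr'
      filter_upwards [hXa, hXb, hab] with n h1 h2 h3
      rw [Xi_Icc hνint h3.2.2.le, h1, h2]
      ring_nf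
    have hLc : Filter.Tendsto (fun n => (b n - a n) / cs n) Filter.atTop
        (nhds ((ν x₀)⁻¹)) := by
      have := hcratio.inv₀ (ne_of_gt (hνpos x₀))
      apply this.congr
      intro n
      rw [inv_div]
    have hEL : Filter.Tendsto (fun n => E n * (b n - a n)) Filter.atTop Filter.atTop := by
      have hmul := atTop_mul_tendsto_pos (inv_pos.2 (hνpos x₀)) hy hLc
      apply hmul.congr
      intro n
      have hc0 : cs n ≠ 0 := (hcio n).1.ne'
      calc cs n * E n * ((b n - a n) / cs n)
          = E n * ((b n - a n) / cs n * cs n) := by ring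
        _ = E n * (b n - a n) := by rw [div_mul_cancel₀ _ hc0]
    have hEP : Filter.Tendsto (fun n => E n * ∫ x in Set.Icc (a n) (b n), p x)
        Filter.atTop Filter.atTop := by
      have hmul := atTop_mul_tendsto_pos hp0x hEL hPr
      apply hmul.congr'
      filter_upwards [hab] with n hn
      have hL0 : b n - a n ≠ 0 := (sub_pos.2 hn.2.2).ne'
      calc E n * (b n - a n) * ((∫ x in Set.Icc (a n) (b n), p x) / (b n - a n))
          = E n * ((∫ x in Set.Icc (a n) (b n), p x) / (b n - a n) * (b n - a n)) := by ring
        _ = E n * ∫ x in Set.Icc (a n) (b n), p x := by rw [div_mul_cancel₀ _ hL0]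
    have hPpos : ∀ᶠ n in Filter.atTop, 0 < ∫ x in Set.Icc (a n) (b n), p x := by
      filter_upwards [hPr.eventually_const_lt hp0x, hab] with n h1 hn
      have hL : 0 < b n - a n := sub_pos.2 hn.2.2
      have h2 : 0 < (∫ x in Set.Icc (a n) (b n), p x) / (b n - a n) * (b n - a n) :=
        mul_pos h1 hL
      rwa [div_mul_cancel₀ _ hL.ne'] at h2
    have hSmid : ∀ᶠ n in Filter.atTop, S n x₀ = Set.Icc (a n) (b n) := by
      filter_upwards [hev1, hev2] with n h1 h2
      ext x
      have hiff := mem_S_iff hmono hXioo hΞ₁ (hcio n) x₀ x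
      have hx1 : ¬(Xi ν x₀ ≤ cs n) := by linarith
      have hx2 : ¬(1 - cs n ≤ Xi ν x₀) := by linarith
      rw [Set.mem_Icc]
      show (gc ν Ξinv (cs n) x₀ ≤ (x : EReal) ∧ (x : EReal) ≤ dc ν Ξinv (cs n) x₀) ↔ _
      rw [hiff]
      constructor
      · rintro ⟨hg, hd⟩
        rcases hg with hcon | hg
        · exact absurd hcon hx1
        rcases hd with hcon | hd
        · exact absurd hcon hx2
        exact ⟨(Xinv_le_iff hmono hΞ₁ (hmemu1 n h1)).2 hg,
          (le_Xinv_iff hmono hΞ₁ (hmemu2 n h2)).2 hd⟩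
      · rintro ⟨hga, hdb⟩
        exact ⟨Or.inr ((Xinv_le_iff hmono hΞ₁ (hmemu1 n h1)).1 hga),
          Or.inr ((le_Xinv_iff hmono hΞ₁ (hmemu2 n h2)).1 hdb)⟩
    have t1 : Filter.Tendsto (fun n =>
        ((∫ x in Set.Icc (a n) (b n), q x) / (b n - a n)) ^ 2 /
          ((∫ x in Set.Icc (a n) (b n), p x) / (b n - a n)))
        Filter.atTop (nhds (q x₀ ^ 2 / p x₀)) := (hQr.pow 2).div hPr hp0x.ne'
    have t2 := div_one_add_tendsto_one hEP
    have t3 : Filter.Tendsto (fun n => ν x₀ * ((b n - a n) / cs n)) Filter.atTop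
        (nhds 1) := by
      have := (tendsto_const_nhds (x := ν x₀)).mul hLc
      rwa [mul_inv_cancel₀ (hνpos x₀).ne'] at this
    have t4 := div_one_add_tendsto_one hy
    have tprod : Filter.Tendsto (fun n =>
        ((∫ x in Set.Icc (a n) (b n), q x) / (b n - a n)) ^ 2 /
            ((∫ x in Set.Icc (a n) (b n), p x) / (b n - a n)) *
          ((E n * ∫ x in Set.Icc (a n) (b n), p x) /
            (1 + E n * ∫ x in Set.Icc (a n) (b n), p x)) *
          (ν x₀ * ((b n - a n) / cs n)) *
          (cs n * E n / (1 + cs n * E n)))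
        Filter.atTop (nhds (q x₀ ^ 2 / p x₀)) := by
      have := ((t1.mul t2).mul t3).mul t4
      simpa using this
    apply tprod.congr'
    filter_upwards [hab, hPpos, hSmid] with n hn hPp hSm
    have hL : 0 < b n - a n := sub_pos.2 hn.2.2
    have hQeq : Q n x₀ = ∫ x in Set.Icc (a n) (b n), q x := by
      show (∫ x in S n x₀, q x) = _
      rw [hSm]
    have hPeq : P n x₀ = ∫ x in Set.Icc (a n) (b n), p x := by
      show (∫ x in S n x₀, p x) = _
      rw [hSm]
    have hD1 : 0 < 1 + E n * ∫ x in Set.Icc (a n) (b n), p x := by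
      nlinarith [hEpos n, hPp]
    show _ = F n x₀
    rw [show F n x₀ = E n ^ 2 * Q n x₀ ^ 2 / (1 + E n * P n x₀) *
      (ν x₀ / (1 + cs n * E n)) from rfl, hQeq, hPeq]
    have hne1 : b n - a n ≠ 0 := hL.ne'
    have hne2 : cs n ≠ 0 := (hcio n).1.ne'
    have hne3 : (∫ x in Set.Icc (a n) (b n), p x) ≠ 0 := hPp.ne'
    have hne4 : 1 + E n * ∫ x in Set.Icc (a n) (b n), p x ≠ 0 := hD1.ne'
    have hne5 : 1 + cs n * E n ≠ 0 := (hcEpos n).ne'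
    field_simp
  -- lower bound via Fatou
  have hlow : H ≤ Filter.liminf (fun n => ∫⁻ x₀, ENNReal.ofReal (F n x₀)) Filter.atTop := by
    have hcongr : (∫⁻ x₀, ENNReal.ofReal (h x₀))
        = ∫⁻ x₀, Filter.liminf (fun n => ENNReal.ofReal (F n x₀)) Filter.atTop := by
      apply lintegral_congr_ae
      filter_upwards [hptw] with x₀ hx₀
      exact (((ENNReal.continuous_ofReal.tendsto _).comp hx₀).liminf_eq).symm
    calc H = ∫⁻ x₀, Filter.liminf (fun n => ENNReal.ofReal (F n x₀)) Filter.atTop := by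
          rw [hH_def]; exact hcongr
      _ ≤ Filter.liminf (fun n => ∫⁻ x₀, ENNReal.ofReal (F n x₀)) Filter.atTop :=
          lintegral_liminf_le fun n => (hFm n).ennreal_ofReal
  -- conclude in ENNReal
  have hEN : Filter.Tendsto (fun n => ∫⁻ x₀, ENNReal.ofReal (F n x₀))
      Filter.atTop (nhds H) := by
    apply tendsto_of_le_liminf_of_limsup_le hlow
    calc Filter.limsup (fun n => ∫⁻ x₀, ENNReal.ofReal (F n x₀)) Filter.atTop
        ≤ Filter.limsup (fun n => K n * B n) Filter.atTop :=
          Filter.limsup_le_limsup (Filter.Eventually.of_forall hchain)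
      _ = H := hU.limsup_eq
  -- back to Bochner integrals
  have hFlint_ne : ∀ n, (∫⁻ x₀, ENNReal.ofReal (F n x₀)) ≠ ⊤ :=
    fun n => ((hchain n).trans_lt (lt_of_le_of_lt (hKBle n) hHne.lt_top)).ne
  have hFeq : ∀ n, ∫ x₀, F n x₀ = (∫⁻ x₀, ENNReal.ofReal (F n x₀)).toReal := fun n =>
    integral_eq_lintegral_of_nonneg_ae (Eventually.of_forall (hF0 n))
      (hFm n).aestronglyMeasurable
  have hfinal : Filter.Tendsto (fun n => (∫⁻ x₀, ENNReal.ofReal (F n x₀)).toReal)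
      Filter.atTop (nhds H.toReal) := (ENNReal.tendsto_toReal hHne).comp hEN
  have hHtoReal : H.toReal = ∫ x, h x := by
    rw [hH, ENNReal.toReal_ofReal (integral_nonneg hh0)]
  rw [show (∫ x, h x) = H.toReal from hHtoReal.symm]
  exact hfinal.congr fun n => by rw [← hFeq n, ← hfisher n]
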